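/- Let p be a prime, d ≥ 1 an integer, F the free group on d generators, and F_2 = F^p[F,F]. Let U be a fully invariant subgroup of F with U ≤ F_2 such that H = F/U is a finite p-group. Then every automorphism of F/F_2 lifts to an automorphism of H: for each θ ∈ Aut(F/F_2) there exists θ'' ∈ Aut(H) such that the automorphism that θ'' induces on H/(F_2/U) ≅ F/F_2 equals θ. -/

import Mathlib

/-!
Choosing preimages of `θ` on the free generators gives an endomorphism `φ` of `F` that agrees
with `θ` modulo `F₂`; by full invariance it descends to an endomorphism `φ'` of `H = F/U`
inducing `θ` on `H/(F₂/U)`. Now `F₂/U = H^p[H,H]`, which lies in the Frattini subgroup of the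
finite `p`-group `H` because every maximal subgroup of `H` is normal of index `p`. Hence the
image of `φ'` together with `Φ(H)` generates `H`, so `φ'` is onto and thus an automorphism.
-/


/-- `pStep p H = H^p [H, G]`: the subgroup generated by all `p`-th powers of elements of `H`
together with all commutators `[x, y]` with `x ∈ H` and `y ∈ G`. -/
def pStep (p : ℕ) {G : Type*} [Group G] (H : Subgroup G) : Subgroup G :=
  Subgroup.closure ((fun g => g ^ p) '' (H : Set G)) ⊔ ⁅H, (⊤ : Subgroup G)⁆

private def lowerPSeriesAux (p : ℕ) (G : Type*) [Group G] : ℕ → Subgroup G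
  | 0 => ⊤
  | (k + 1) => pStep p (lowerPSeriesAux p G k)

/-- The lower `p`-series of `G`, indexed as in the paper: `G_1 = G` and
`G_{i+1} = G_i^p [G_i, G]`.  (The value at `0` is junk, equal to `G_1 = G`.) -/
def lowerPSeries (p : ℕ) (G : Type*) [Group G] (i : ℕ) : Subgroup G :=
  lowerPSeriesAux p G (i - 1)

theorem pStep_le (p : ℕ) {G : Type*} [Group G] {H : Subgroup G} (hH : H.Normal) :
    pStep p H ≤ H := by
  apply sup_le
  · rw [Subgroup.closure_le]
    rintro _ ⟨h, hh, rfl⟩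
    exact H.pow_mem hh p
  · exact Subgroup.commutator_le_left H ⊤

theorem pStep_normal (p : ℕ) {G : Type*} [Group G] {H : Subgroup G} (hH : H.Normal) :
    (pStep p H).Normal := by
  constructor
  intro x hx g
  have hxH : x ∈ H := pStep_le p hH hx
  open scoped commutatorElement in
  have : g * x * g⁻¹ = ⁅g, x⁆ * x := by group
  rw [this]
  refine Subgroup.mul_mem _ ?_ hx
  refine le_sup_right (α := Subgroup G) ?_
  have hcomm : (⁅(⊤ : Subgroup G), H⁆ : Subgroup G) = ⁅H, (⊤ : Subgroup G)⁆ :=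
    Subgroup.commutator_comm ⊤ H
  rw [← hcomm]
  exact Subgroup.commutator_mem_commutator (Subgroup.mem_top g) hxH

instance lowerPSeries_normal (p : ℕ) (G : Type*) [Group G] (i : ℕ) :
    (lowerPSeries p G i).Normal := by
  rw [lowerPSeries]
  generalize i - 1 = k
  induction k with
  | zero => show (⊤ : Subgroup G).Normal; infer_instance
  | succ k ih => exact pStep_normal p ih

/-- A group is minimally generated by `d` elements if it is generated by some `d` elements
but by no fewer. -/
def MinGenBy (G : Type*) [Group G] (d : ℕ) : Prop :=
  (∃ S : Finset G, S.card = d ∧ Subgroup.closure (S : Set G) = ⊤) ∧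
    ∀ S : Finset G, Subgroup.closure (S : Set G) = ⊤ → d ≤ S.card

/-- A subgroup is fully invariant if every endomorphism of the group maps it into itself. -/
def FullyInvariant {G : Type*} [Group G] (U : Subgroup G) : Prop :=
  ∀ φ : G →* G, Subgroup.map φ U ≤ U

lemma lowerPSeries_two (p : ℕ) (G : Type*) [Group G] :
    lowerPSeries p G 2 = pStep p (⊤ : Subgroup G) :=
  rfl

section PStep

variable {p : ℕ} {G : Type*} [Group G]

lemma map_pStep_le {G' : Type*} [Group G'] (f : G →* G') (H : Subgroup G) :
    (pStep p H).map f ≤ pStep p (H.map f) := by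
  rw [pStep, pStep, Subgroup.map_sup, MonoidHom.map_closure, Subgroup.map_commutator]
  refine sup_le_sup (Subgroup.closure_mono ?_) (Subgroup.commutator_mono le_rfl le_top)
  rintro _ ⟨_, ⟨x, hx, rfl⟩, rfl⟩
  exact ⟨f x, Subgroup.mem_map_of_mem f hx, (map_pow f x p).symm⟩

lemma pStep_top_le_ker {Q : Type*} [Group Q] (f : G →* Q) (hcomm : ∀ a b : Q, Commute a b)
    (hexp : ∀ a : Q, a ^ p = 1) : pStep p (⊤ : Subgroup G) ≤ f.ker := by
  refine sup_le ?_ ?_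
  · rw [Subgroup.closure_le]
    rintro _ ⟨x, -, rfl⟩
    rw [SetLike.mem_coe, MonoidHom.mem_ker, map_pow, hexp]
  · rw [Subgroup.commutator_le]
    intro a _ b _
    rw [MonoidHom.mem_ker, map_commutatorElement, commutatorElement_eq_one_iff_commute]
    exact hcomm _ _

end PStep

lemma isSimpleOrder_subgroup_quotient_of_isCoatom {G : Type*} [Group G] {M : Subgroup G}
    [M.Normal] (hM : IsCoatom M) : IsSimpleOrder (Subgroup (G ⧸ M)) :=
  (OrderIso.isSimpleOrder_iff (β := Set.Ici M) (QuotientGroup.comapMk'OrderIso M)).mpr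
    (Set.isSimpleOrder_Ici_iff_isCoatom.mpr hM)

namespace IsPGroup

variable {p : ℕ} [Fact p.Prime] {G : Type*} [Group G] [Finite G]

lemma card_quotient_of_isCoatom (hG : IsPGroup p G) {M : Subgroup G} [M.Normal]
    (hM : IsCoatom M) : Nat.card (G ⧸ M) = p := by
  have := isSimpleOrder_subgroup_quotient_of_isCoatom hM
  have : Nontrivial (G ⧸ M) := QuotientGroup.nontrivial_iff.mpr hM.1
  obtain ⟨n, hn, hcard⟩ := (hG.to_quotient M).nontrivial_iff_card.mp this
  obtain ⟨g, hg⟩ := exists_prime_orderOf_dvd_card' p (hcard ▸ dvd_pow_self p hn.ne')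
  have hg1 : g ≠ 1 := fun h => (Fact.out : p.Prime).one_lt.ne' (by rw [← hg, h, orderOf_one])
  have htop : Subgroup.zpowers g = ⊤ :=
    (eq_bot_or_eq_top (Subgroup.zpowers g)).resolve_left (by simpa using hg1)
  rw [← hg, ← Nat.card_zpowers, htop, Subgroup.card_top]

theorem pStep_top_le_frattini (hG : IsPGroup p G) : pStep p (⊤ : Subgroup G) ≤ frattini G := by
  refine le_iInf₂ fun M hM => ?_
  have : Group.IsNilpotent G := hG.isNilpotent
  have : M.Normal :=
    Subgroup.NormalizerCondition.normal_of_coatom M Group.normalizerCondition_of_isNilpotent hM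
  have hcard := hG.card_quotient_of_isCoatom hM
  have : IsCyclic (G ⧸ M) := isCyclic_of_prime_card hcard
  rw [← QuotientGroup.ker_mk' M]
  exact pStep_top_le_ker _ (fun a b => (IsCyclic.commGroup.mul_comm a b :))
    fun a => hcard ▸ pow_card_eq_one'

end IsPGroup

lemma surjective_of_surjective_comp_of_ker_le_frattini {G Q : Type*} [Group G] [Group Q]
    [IsCoatomic (Subgroup G)] {ψ : G →* G} {q : G →* Q} (h : Function.Surjective (q.comp ψ))
    (hker : q.ker ≤ frattini G) : Function.Surjective ψ := by
  have hsup : ψ.range ⊔ q.ker = ⊤ := by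
    rw [← Subgroup.comap_map_eq, MonoidHom.map_range, MonoidHom.range_eq_top.mpr h,
      Subgroup.comap_top]
  exact MonoidHom.range_eq_top.mp
    (frattini_nongenerating (top_unique (hsup.ge.trans (sup_le_sup_left hker _))))

lemma FreeGroup.exists_lift_of_surjective {α G Q : Type*} [Group G] [Group Q] {π : G →* Q}
    (hπ : Function.Surjective π) (f : FreeGroup α →* Q) :
    ∃ φ : FreeGroup α →* G, π.comp φ = f :=
  ⟨FreeGroup.lift fun a => Function.surjInv hπ (f (FreeGroup.of a)),
    FreeGroup.ext_hom _ _ fun a => by simp [Function.surjInv_eq hπ]⟩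

/-- **Proposition: automorphisms of `F/F₂` lift to automorphisms of `H = F/U`** whenever
`U` is a fully invariant subgroup of the free group `F` contained in `F₂` such that `F/U`
is a finite `p`-group: for every `θ ∈ Aut(F/F₂)` there is `θ'' ∈ Aut(F/U)` inducing `θ`
on the quotient `F/F₂` of `F/U`. -/
theorem aut_of_frattini_quotient_lifts (p d : ℕ) (hp : p.Prime)
    (U : Subgroup (FreeGroup (Fin d))) [U.Normal]
    (hUfi : FullyInvariant U)
    (hU2 : U ≤ lowerPSeries p (FreeGroup (Fin d)) 2)
    (hfin : Finite (FreeGroup (Fin d) ⧸ U))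
    (hpg : IsPGroup p (FreeGroup (Fin d) ⧸ U)) :
    ∀ θ : (FreeGroup (Fin d) ⧸ lowerPSeries p (FreeGroup (Fin d)) 2) ≃*
        (FreeGroup (Fin d) ⧸ lowerPSeries p (FreeGroup (Fin d)) 2),
      ∃ θ'' : (FreeGroup (Fin d) ⧸ U) ≃* (FreeGroup (Fin d) ⧸ U),
        ∀ x : FreeGroup (Fin d) ⧸ U,
          QuotientGroup.map U (lowerPSeries p (FreeGroup (Fin d)) 2) (MonoidHom.id _)
              (by simpa using hU2) (θ'' x) =
            θ (QuotientGroup.map U (lowerPSeries p (FreeGroup (Fin d)) 2) (MonoidHom.id _)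
              (by simpa using hU2) x) := by
  intro θ
  have : Fact p.Prime := ⟨hp⟩
  set F₂ := lowerPSeries p (FreeGroup (Fin d)) 2 with hF₂
  set q := QuotientGroup.map U F₂ (MonoidHom.id _) (by simpa using hU2)
  have hq : Function.Surjective q :=
    QuotientGroup.map_surjective_of_surjective _ _ _ QuotientGroup.mk_surjective _
  obtain ⟨φ, hφ⟩ := FreeGroup.exists_lift_of_surjective (QuotientGroup.mk'_surjective F₂)
    (θ.toMonoidHom.comp (QuotientGroup.mk' F₂))
  set φ' := QuotientGroup.map U U φ (Subgroup.map_le_iff_le_comap.mp (hUfi φ))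
  have hlift : q.comp φ' = θ.toMonoidHom.comp q := QuotientGroup.monoidHom_ext U hφ
  have hker : q.ker ≤ frattini (FreeGroup (Fin d) ⧸ U) := by
    rw [QuotientGroup.ker_map, Subgroup.comap_id, hF₂, lowerPSeries_two]
    refine (map_pStep_le _ _).trans ?_
    rw [Subgroup.map_top_of_surjective _ (QuotientGroup.mk'_surjective U)]
    exact hpg.pStep_top_le_frattini
  have hsurj : Function.Surjective φ' :=
    surjective_of_surjective_comp_of_ker_le_frattini (hlift ▸ θ.surjective.comp hq) hker
  exact ⟨MulEquiv.ofBijective φ' ⟨Finite.injective_iff_surjective.mpr hsurj, hsurj⟩,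
    DFunLike.congr_fun hlift⟩
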